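/- arXiv:1401.2052 — 5 statements merged into one kernel-verified Lean document; each statement's English description precedes it below -/
import Mathlib

section
/- Let R be a commutative J-clean ring in which 2 is a unit. The following are equivalent: (1) the matrix ring M₂(R) is strongly clean; (2) for every a in the Jacobson radical J(R) there exists r ∈ R with r² − r + a = 0; (3) every element of 1 + J(R) has a square root lying in 1 + J(R); (4) every element of 1 + J(R) has a square root in R. -/
/-- An element of a ring is *strongly clean* if it is the sum of an idempotent and a unit
that commute with each other. -/
def IsStronglyClean {S : Type*} [Ring S] (a : S) : Prop :=
  ∃ e u : S, IsIdempotentElem e ∧ IsUnit u ∧ a = e + u ∧ e * u = u * e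

/-- A commutative ring is *J-clean* if for every `r` there is an idempotent `e` with
`r e + (1 - e)` a unit and `r (1 - e)` in the Jacobson radical. -/
def IsJCleanRing (R : Type*) [CommRing R] : Prop :=
  ∀ r : R, ∃ e : R, IsIdempotentElem e ∧ IsUnit (r * e + (1 - e)) ∧
    r * (1 - e) ∈ Ideal.jacobson (⊥ : Ideal R)

private lemma oneAdd_unit {R : Type*} [CommRing R] {j : R}
    (hj : j ∈ Ideal.jacobson (⊥ : Ideal R)) : IsUnit (1 + j) := by
  have := Ideal.mem_jacobson_bot.mp hj 1
  simpa [add_comm] using this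

private lemma idem_unit_eq_one {R : Type*} [CommRing R] {h : R}
    (hh : h*h = h) (hu : IsUnit h) : h = 1 := by
  obtain ⟨h', hh'⟩ := hu.exists_right_inv
  linear_combination h' * hh + (1 - h) * hh'

private lemma lift_idem {R : Type*} [CommRing R] (hR : IsJCleanRing R) {r : R}
    (hr : r*r - r ∈ Ideal.jacobson (⊥ : Ideal R)) :
    ∃ e : R, e*e = e ∧ r - e ∈ Ideal.jacobson (⊥ : Ideal R) := by
  obtain ⟨e, he, hu, hj⟩ := hR r
  have he' : e*e = e := he
  obtain ⟨u', hu'⟩ := hu.exists_right_inv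
  refine ⟨e, he', ?_⟩
  have hY : (r*e)*(r*e) - r*e ∈ Ideal.jacobson (⊥ : Ideal R) := by
    have := Ideal.mul_mem_left _ e hr
    rwa [show e*(r*r - r) = (r*e)*(r*e) - r*e by linear_combination (-(r*r))*he'] at this
  have key : r*e - e = u' * ((r*e)*(r*e) - r*e) := by
    linear_combination (u' - 2*r*u')*he' + (e - e*r)*hu'
  have h1 : r - e = r*(1-e) + (r*e - e) := by ring
  rw [h1]
  exact Ideal.add_mem _ hj (key ▸ Ideal.mul_mem_left _ u' hY)

private lemma root_in_J {R : Type*} [CommRing R] (hR : IsJCleanRing R) {a : R}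
    (ha : a ∈ Ideal.jacobson (⊥ : Ideal R)) (h : ∃ r : R, r^2 - r + a = 0) :
    ∃ r : R, r ∈ Ideal.jacobson (⊥ : Ideal R) ∧ r^2 - r + a = 0 := by
  obtain ⟨r0, hr0⟩ := h
  have hmem : r0*r0 - r0 ∈ Ideal.jacobson (⊥ : Ideal R) := by
    have := (Ideal.jacobson (⊥ : Ideal R)).neg_mem ha
    rwa [show -a = r0*r0 - r0 by linear_combination -hr0] at this
  obtain ⟨e, he, heJ⟩ := lift_idem hR hmem
  refine ⟨r0 + e - 2*e*r0, ?_, ?_⟩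
  · have hre : r0 + e - 2*e*r0 = (1-2*e)*(r0-e) := by linear_combination (-2)*he
    rw [hre]
    exact Ideal.mul_mem_left _ _ heJ
  · linear_combination hr0 + (1 + 4*r0^2 - 4*r0)*he

open Polynomial in
private lemma aux_poly {R : Type*} [CommRing R] (τ δ e f g u' v' l m c l1' m' : R)
    (he : e*e = e) (hf : f*f = f) (hg : g*g = g)
    (hef : e*f = 0) (heg : e*g = 0) (hfg : f*g = 0)
    (h1 : e + f + g = 1)
    (hu : δ*e*u' = e)
    (hv : (1 - τ + δ)*f*v' = f)
    (hs : (l + m)*g = τ*g)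
    (hp : l*m = δ*g)
    (hc : (m - l)*c = 1)
    (hl1 : (l - 1)*l1' = 1)
    (hm : m*m' = 1) :
    ∃ ε υ V d₁ d₂ : Polynomial R,
      (X : Polynomial R) = ε + υ ∧
      ε*ε = ε + d₁*(X^2 - C τ*X + C δ) ∧
      υ*V = 1 + d₂*(X^2 - C τ*X + C δ) := by
  set Ce := (C e : Polynomial R) with hCe
  set Cf := (C f : Polynomial R) with hCf
  set Cg := (C g : Polynomial R) with hCg
  set Cw := (C τ : Polynomial R) with hCw
  set Cd := (C δ : Polynomial R) with hCd
  set Cu := (C u' : Polynomial R) with hCu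
  set Cv := (C v' : Polynomial R) with hCv
  set Cl := (C l : Polynomial R) with hCl
  set Cm := (C m : Polynomial R) with hCm
  set Cc := (C c : Polynomial R) with hCc
  set Cl1 := (C l1' : Polynomial R) with hCl1
  set Cm1 := (C m' : Polynomial R) with hCm1
  have CHe : Ce*Ce = Ce := by rw [hCe, ← C_mul, he]
  have CHf : Cf*Cf = Cf := by rw [hCf, ← C_mul, hf]
  have CHg : Cg*Cg = Cg := by rw [hCg, ← C_mul, hg]
  have CHef : Ce*Cf = 0 := by rw [hCe, hCf, ← C_mul, hef, C_0]
  have CHeg : Ce*Cg = 0 := by rw [hCe, hCg, ← C_mul, heg, C_0]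
  have CHfg : Cf*Cg = 0 := by rw [hCf, hCg, ← C_mul, hfg, C_0]
  have CH1 : Ce + Cf + Cg = 1 := by rw [hCe, hCf, hCg, ← C_add, ← C_add, h1, C_1]
  have CHu : Cd*Ce*Cu = Ce := by rw [hCd, hCe, hCu, ← C_mul, ← C_mul, hu]
  have CHv : (1 - Cw + Cd)*Cf*Cv = Cf := by
    rw [hCw, hCd, hCf, hCv]
    simpa [map_mul, map_sub, map_add, map_one] using congrArg (C (R := R)) hv
  have CHs : (Cl + Cm)*Cg = Cw*Cg := by
    rw [hCl, hCm, hCg, hCw, ← C_add, ← C_mul, ← C_mul, hs]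
  have CHp : Cl*Cm = Cd*Cg := by rw [hCl, hCm, hCd, hCg, ← C_mul, ← C_mul, hp]
  have CHc : (Cm - Cl)*Cc = 1 := by rw [hCm, hCl, hCc, ← C_sub, ← C_mul, hc, C_1]
  have CHl1 : (Cl - 1)*Cl1 = 1 := by
    rw [hCl, hCl1]
    simpa [map_mul, map_sub, map_one] using congrArg (C (R := R)) hl1
  have CHm : Cm*Cm1 = 1 := by rw [hCm, hCm1, ← C_mul, hm, C_1]
  refine ⟨Cf + Cg - Cc*(Cg*X - Cl*Cg), X - (Cf + Cg - Cc*(Cg*X - Cl*Cg)), Cu*Ce*(Cw - X) + Cv*Cf*(Cw - 1 - X) + Cl1*(Cg - Cc*(Cg*X - Cl*Cg)) + Cm1*(Cc*(Cg*X - Cl*Cg)), ((1)*Cg^2*Cc^2), ((1)*Cg^2*Cc^2*Cm1 + (-1)*Cg^2*Cc^2*Cl1 + (1)*Cg^2*Cm*Cc^2*Cm1 + (-1)*Cg^2*Cm*Cc^2*Cl1 + (-1)*Cg^2*Cl*Cc^2*Cm1 + (1)*Cg^2*Cl*Cc^2*Cl1 + (-1)*Cf^2*Cv + (-1)*Ce^2*Cu),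 by ring, ?_, ?_⟩
  · linear_combination ((1)) * CHf + ((1) + (2)*Cl*Cc + (1)*Cl^2*Cc^2 + (-2)*X*Cc + (1)*X*Cm*Cc^2 + (-1)*X*Cl*Cc^2) * CHg + ((2) + (2)*Cl*Cc + (-2)*X*Cc) * CHfg + ((-1)*X*Cg*Cc^2) * CHs + ((1)*Cg*Cc^2) * CHp + ((-1)*Cg*Cl*Cc + (1)*X*Cg*Cc) * CHc
  · linear_combination ((1)*Ce) * CHu + ((1)) * CHe + ((1)*Cf) * CHv + ((1)) * CHf + ((-1)*Cl1 + (1)*Cl*Cl1 + (1)*Cl*Cc*Cm1 + (-2)*Cl*Cc*Cl1 + (-1)*Cl*Cm*Cc*Cl1 + (-1)*Cl^2*Cc*Cm1 + (2)*Cl^2*Cc*Cl1 + (1)*Cl^2*Cc^2*Cm1 + (-1)*Cl^2*Cc^2*Cl1 + (1)*Cl^2*Cm*Cc^2*Cm1 + (-1)*Cl^2*Cm*Cc^2*Cl1 + (-1)*Cl^3*Cc^2*Cm1 + (1)*Cl^3*Cc^2*Cl1 + (-1)*X*Cc*Cm1 + (2)*X*Cc*Cl1 + (1)*X*Cm*Cc*Cl1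 + (1)*X*Cm*Cc^2*Cm1 + (-1)*X*Cm*Cc^2*Cl1 + (1)*X*Cm^2*Cc^2*Cm1 + (-1)*X*Cm^2*Cc^2*Cl1 + (1)*X*Cl*Cc*Cm1 + (-2)*X*Cl*Cc*Cl1 + (-1)*X*Cl*Cc^2*Cm1 + (1)*X*Cl*Cc^2*Cl1 + (-2)*X*Cl*Cm*Cc^2*Cm1 + (2)*X*Cl*Cm*Cc^2*Cl1 + (1)*X*Cl^2*Cc^2*Cm1 + (-1)*X*Cl^2*Cc^2*Cl1) * CHg + ((-1)*X*Cg*Cc^2*Cm1 + (1)*X*Cg*Cc^2*Cl1 + (-1)*X*Cg*Cm*Cc^2*Cm1 + (1)*X*Cg*Cm*Cc^2*Cl1 + (1)*X*Cg*Cl*Cc^2*Cm1 + (-1)*X*Cg*Cl*Cc^2*Cl1) * CHs + ((1)*Cg*Cc^2*Cm1 + (-1)*Cg*Cc^2*Cl1 + (1)*Cg*Cm*Cc^2*Cm1 + (-1)*Cg*Cm*Cc^2*Cl1 + (-1)*Cg*Cl*Cc^2*Cm1 + (1)*Cg*Cl*Cc^2*Cl1) * CHp + ((-1)*Cg*Cl*Cc*Cm1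 + (1)*Cg*Cl*Cc*Cl1 + (-1)*Cg*Cl*Cm*Cc*Cm1 + (1)*Cg*Cl*Cm*Cc*Cl1 + (1)*Cg*Cl^2*Cc*Cm1 + (-1)*Cg*Cl^2*Cc*Cl1 + (1)*Cg^2*Cl*Cl1 + (-1)*Cg^2*Cl^2*Cc*Cm1 + (1)*Cg^2*Cl^2*Cc*Cl1 + (1)*X*Cg*Cc*Cm1 + (-1)*X*Cg*Cc*Cl1 + (1)*X*Cg*Cm*Cc*Cm1 + (-1)*X*Cg*Cm*Cc*Cl1 + (-1)*X*Cg*Cl*Cc*Cm1 + (1)*X*Cg*Cl*Cc*Cl1 + (-1)*X*Cg^2*Cl1 + (2)*X*Cg^2*Cl*Cc*Cm1 + (-2)*X*Cg^2*Cl*Cc*Cl1 + (-1)*X^2*Cg^2*Cc*Cm1 + (1)*X^2*Cg^2*Cc*Cl1) * CHc + ((1)*Cg + (1)*Cg*Cl*Cc + (-1)*X*Cg*Cc) * CHl1 + ((-1)*Cg*Cl*Cc + (1)*X*Cg*Cc) * CHm + ((-1)*Cw*Cu + (-1)*X*Cv + (1)*X*Cu + (1)*X*Cw*Cv + (1)*X*Cw*Cu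 + (-1)*X^2*Cv + (-1)*X^2*Cu) * CHef + ((-1)*Cw*Cu + (-1)*Cw*Cu*Cl*Cc + (1)*X*Cl1 + (-1)*X*Cl*Cc*Cm1 + (1)*X*Cl*Cc*Cl1 + (1)*X*Cu + (1)*X*Cu*Cl*Cc + (1)*X*Cw*Cu + (1)*X*Cw*Cu*Cc + (1)*X^2*Cc*Cm1 + (-1)*X^2*Cc*Cl1 + (-1)*X^2*Cu + (-1)*X^2*Cu*Cc) * CHeg + ((-1)*Cl1 + (1)*Cl*Cc*Cm1 + (-1)*Cl*Cc*Cl1 + (1)*Cv + (1)*Cv*Cl*Cc + (-1)*Cw*Cv + (-1)*Cw*Cv*Cl*Cc + (1)*X*Cl1 + (-1)*X*Cc*Cm1 + (1)*X*Cc*Cl1 + (-1)*X*Cl*Cc*Cm1 + (1)*X*Cl*Cc*Cl1 + (-1)*X*Cv*Cc + (1)*X*Cv*Cl*Cc + (1)*X*Cw*Cv + (1)*X*Cw*Cv*Cc + (1)*X^2*Cc*Cm1 + (-1)*X^2*Cc*Cl1 + (-1)*X^2*Cv + (-1)*X^2*Cv*Cc) * CHfg + ((1) + (-1)*X*Cg*Cl1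 + (1)*X*Cg*Cl*Cc*Cm1 + (-1)*X*Cg*Cl*Cc*Cl1 + (1)*X*Cf*Cv + (-1)*X*Cf*Cw*Cv + (-1)*X*Ce*Cw*Cu + (-1)*X^2*Cg*Cc*Cm1 + (1)*X^2*Cg*Cc*Cl1 + (1)*X^2*Cf*Cv + (1)*X^2*Ce*Cu) * CH1
/-- For a commutative J-clean ring `R` in which `2` is a unit, the following are equivalent:
`M₂(R)` is strongly clean; every `t² - t + a` with `a ∈ J(R)` has a root in `R`; every
element of `1 + J(R)` has a square root in `1 + J(R)`; every element of `1 + J(R)` has a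
square root in `R`. -/
theorem matrix_two_stronglyClean_tfae_of_jClean_two_unit {R : Type*} [CommRing R]
    (hR : IsJCleanRing R) (h2 : IsUnit (2 : R)) :
    List.TFAE
      [∀ A : Matrix (Fin 2) (Fin 2) R, IsStronglyClean A,
       ∀ a ∈ Ideal.jacobson (⊥ : Ideal R), ∃ r : R, r ^ 2 - r + a = 0,
       ∀ x : R, x - 1 ∈ Ideal.jacobson (⊥ : Ideal R) →
         ∃ y : R, y - 1 ∈ Ideal.jacobson (⊥ : Ideal R) ∧ y ^ 2 = x,
       ∀ x : R, x - 1 ∈ Ideal.jacobson (⊥ : Ideal R) → ∃ y : R, y ^ 2 = x] := by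
  tfae_have 1 → 2 := by
    intro h1' a ha
    obtain ⟨E, U, hE0, hU, hAEU, hEU⟩ := h1' !![0, -a; 1, 1]
    have hE : E*E = E := hE0
    have hUeq : U = !![0, -a; 1, 1] - E := by rw [hAEU]; abel
    have hEA : E * !![0, -a; 1, 1] = !![0, -a; 1, 1] * E := by
      rw [hAEU, mul_add, add_mul, hEU]
    have hq : E 0 1 = -(a * E 1 0) := by
      have h00 := congrFun (congrFun hEA 0) 0
      simpa [Matrix.mul_apply, Fin.sum_univ_two] using h00
    have hs : E 1 1 = E 0 0 + E 1 0 := by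
      have h10 := congrFun (congrFun hEA 1) 0
      simpa [Matrix.mul_apply, Fin.sum_univ_two] using h10
    have h00' : E 0 0 * E 0 0 + E 0 1 * E 1 0 = E 0 0 := by
      have := congrFun (congrFun hE 0) 0
      simpa [Matrix.mul_apply, Fin.sum_univ_two] using this
    have h10' : E 1 0 * E 0 0 + E 1 1 * E 1 0 = E 1 0 := by
      have := congrFun (congrFun hE 1) 0
      simpa [Matrix.mul_apply, Fin.sum_univ_two] using this
    obtain ⟨n', hn'⟩ := ((Matrix.isUnit_iff_isUnit_det U).mp hU).exists_right_inv
    have hn2 : ((0 - E 0 0)*(1 - E 1 1) - (-a - E 0 1)*(1 - E 1 0)) * n' = 1 := by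
      rw [hUeq] at hn'
      rw [show (0 - E 0 0)*(1 - E 1 1) - (-a - E 0 1)*(1 - E 1 0)
            = (!![0, -a; 1, 1] - E).det by
          rw [Matrix.det_fin_two]
          simp [Matrix.sub_apply]]
      exact hn'
    obtain ⟨h, hh0, hw, hjr⟩ := hR (E 1 0)
    have hh : h*h = h := hh0
    have hnm : ((0 - E 0 0)*(1 - E 1 1) - (-a - E 0 1)*(1 - E 1 0))*(1-h)
        = a*(E 1 0)^2*(1-h) + (E 0 0)*((E 1 0)*(1-h)) + a*(1-(E 1 0))^2*(1-h) := by
      linear_combination (1 - h - 2*(E 1 0) + 2*(E 1 0)*h)*hq + ((E 0 0) - (E 0 0)*h)*hs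
        + (1-h)*h00'
    have hmem : ((0 - E 0 0)*(1 - E 1 1) - (-a - E 0 1)*(1 - E 1 0))*(1-h)
        ∈ Ideal.jacobson (⊥ : Ideal R) := by
      rw [hnm]
      exact Ideal.add_mem _
        (Ideal.add_mem _ (Ideal.mul_mem_right _ _ (Ideal.mul_mem_right _ _ ha))
          (Ideal.mul_mem_left _ _ hjr))
        (Ideal.mul_mem_right _ _ (Ideal.mul_mem_right _ _ ha))
    have h1h : (1:R) - h ∈ Ideal.jacobson (⊥ : Ideal R) := by
      have heq : (1:R) - h
          = (((0 - E 0 0)*(1 - E 1 1) - (-a - E 0 1)*(1 - E 1 0))*(1-h))*n' := by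
        linear_combination (-(1-h))*hn2
      rw [heq]
      exact Ideal.mul_mem_right _ _ hmem
    have hhu : IsUnit h := by
      have := Ideal.mem_jacobson_bot.mp h1h (-1)
      rwa [show ((1:R)-h)*(-1)+1 = h by ring] at this
    have hh1 : h = 1 := idem_unit_eq_one hh hhu
    have hrU : IsUnit (E 1 0) := by
      rw [hh1] at hw; simpa using hw
    obtain ⟨r', hr'⟩ := hrU.exists_right_inv
    have h2pr : 2*(E 0 0) + E 1 0 = 1 := by
      linear_combination r'*h10' + (-1)*hs + (1 - E 1 1 - E 0 0)*hr'
    have hrval : E 1 0 = 1 - 2*(E 0 0) := by linear_combination h2pr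
    have harr : a*(1-2*(E 0 0))^2 = (E 0 0)*(E 0 0) - E 0 0 := by
      have : a*(E 1 0)^2 = (E 0 0)*(E 0 0) - E 0 0 := by
        linear_combination (E 1 0)*hq - h00'
      rwa [hrval] at this
    have hr'' : (1-2*(E 0 0))*r' = 1 := by rw [← hrval]; exact hr'
    refine ⟨(1 - E 0 0)*r', ?_⟩
    linear_combination r'^2*harr + (r' - a - a*r' - (E 0 0)*r' + 2*(E 0 0)*a*r')*hr''
  tfae_have 2 → 1 := by
    intro h2' A
    have hq0 : (Polynomial.aeval (R := R) A) ((Polynomial.X)^2 - Polynomial.C A.trace * Polynomial.X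
        + Polynomial.C A.det) = (0 : Matrix (Fin 2) (Fin 2) R) := by
      simp only [map_add, map_sub, map_mul, map_pow, Polynomial.aeval_X, Polynomial.aeval_C]
      ext i j
      fin_cases i <;> fin_cases j <;>
        simp [pow_two, Matrix.mul_apply, Fin.sum_univ_two, Matrix.algebraMap_matrix_apply,
          Matrix.trace_fin_two, Matrix.det_fin_two, Matrix.sub_apply, Matrix.add_apply] <;>
        ring
    obtain ⟨e, he0, hue, hje⟩ := hR A.det
    have he : e*e = e := he0
    obtain ⟨f0, hf00, hvf, hjf⟩ := hR (1 - A.trace + A.det)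
    have hf0 : f0*f0 = f0 := hf00
    obtain ⟨u', hu'⟩ := hue.exists_right_inv
    obtain ⟨v', hv'⟩ := hvf.exists_right_inv
    have hδg : A.det*((1-e)*(1-f0)) ∈ Ideal.jacobson (⊥ : Ideal R) := by
      have := Ideal.mul_mem_right (1-f0) _ hje
      rwa [mul_assoc] at this
    have hβg : (1 - A.trace + A.det)*((1-e)*(1-f0)) ∈ Ideal.jacobson (⊥ : Ideal R) := by
      have := Ideal.mul_mem_right (1-e) _ hjf
      rwa [show (1 - A.trace + A.det)*(1-f0)*(1-e)
          = (1 - A.trace + A.det)*((1-e)*(1-f0)) by ring] at this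
    have hτg : (A.trace - 1)*((1-e)*(1-f0)) ∈ Ideal.jacobson (⊥ : Ideal R) := by
      have := Ideal.sub_mem _ hδg hβg
      rwa [show A.det*((1-e)*(1-f0)) - (1 - A.trace + A.det)*((1-e)*(1-f0))
          = (A.trace - 1)*((1-e)*(1-f0)) by ring] at this
    set t := 1 + (A.trace - 1)*((1-e)*(1-f0)) with htdef0
    have ht : IsUnit t := by rw [htdef0]; exact oneAdd_unit hτg
    obtain ⟨t', htt'⟩ := ht.exists_right_inv
    have haJ : A.det*((1-e)*(1-f0))*(t'*t') ∈ Ideal.jacobson (⊥ : Ideal R) :=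
      Ideal.mul_mem_right _ _ hδg
    obtain ⟨r, hrJ, hr⟩ := root_in_J hR haJ (h2' _ haJ)
    have hmlU : IsUnit (t - t*r - t*r) := by
      have h2rJ : -(2*r) ∈ Ideal.jacobson (⊥ : Ideal R) :=
        (Ideal.jacobson (⊥ : Ideal R)).neg_mem (Ideal.mul_mem_left _ 2 hrJ)
      have := ht.mul (oneAdd_unit h2rJ)
      rwa [show t*(1 + -(2*r)) = t - t*r - t*r by ring] at this
    obtain ⟨c, hc'⟩ := hmlU.exists_right_inv
    have hl1U : IsUnit (t*r - 1) := by
      have := (oneAdd_unit ((Ideal.jacobson (⊥ : Ideal R)).neg_mem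
        (Ideal.mul_mem_left _ t hrJ))).neg
      rwa [show -(1 + -(t*r)) = t*r - 1 by ring] at this
    obtain ⟨l1', hl1'⟩ := hl1U.exists_right_inv
    have hmU : IsUnit (t - t*r) := by
      have := ht.mul (oneAdd_unit ((Ideal.jacobson (⊥ : Ideal R)).neg_mem hrJ))
      rwa [show t*(1 + -r) = t - t*r by ring] at this
    obtain ⟨m', hm'⟩ := hmU.exists_right_inv
    have Ghf : (f0*(1-e))*(f0*(1-e)) = f0*(1-e) := by
      linear_combination (f0^2)*he + (1-e)*hf0
    have Ghg : ((1-e)*(1-f0))*((1-e)*(1-f0)) = (1-e)*(1-f0) := by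
      linear_combination (1 - 2*f0 + f0^2)*he + (1-e)*hf0
    have Ghef : e*(f0*(1-e)) = 0 := by linear_combination (-f0)*he
    have Gheg : e*((1-e)*(1-f0)) = 0 := by linear_combination (-1+f0)*he
    have Ghfg : (f0*(1-e))*((1-e)*(1-f0)) = 0 := by
      linear_combination (f0 - f0^2)*he + (-1+e)*hf0
    have Gh1 : e + f0*(1-e) + (1-e)*(1-f0) = 1 := by ring
    have Ghu : A.det*e*u' = e := by
      linear_combination (u' - A.det*u')*he + e*hu'
    have Ghv : (1 - A.trace + A.det)*(f0*(1-e))*v' = f0*(1-e) := by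
      linear_combination (-A.det*v' + A.trace*v' + e*A.det*v' - e*A.trace*v')*hf0
        + (f0 - e*f0)*hv'
    have Ghs : (t*r + (t - t*r))*((1-e)*(1-f0)) = A.trace*((1-e)*(1-f0)) := by
      linear_combination (-1 + A.trace + f0 - f0*A.trace)*he
        + (-1 + A.trace + 2*e - 2*e*A.trace - e^2 + e^2*A.trace)*hf0
        + (1 - f0 - e + e*f0)*htdef0
    have Ghp : (t*r)*(t - t*r) = A.det*((1-e)*(1-f0)) := by
      linear_combination (A.det + A.det*t*t' - f0*A.det - f0*A.det*t*t' - e*A.det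
        - e*A.det*t*t' + e*f0*A.det + e*f0*A.det*t*t')*htt' + (-t^2)*hr
    have Ghc : ((t - t*r) - (t*r))*c = 1 := by linear_combination hc'
    obtain ⟨ε, υ, V, d₁, d₂, hsum, hidem, hunit⟩ :=
      aux_poly A.trace A.det e (f0*(1-e)) ((1-e)*(1-f0)) u' v' (t*r) (t - t*r) c l1' m'
        he Ghf Ghg Ghef Gheg Ghfg Gh1 Ghu Ghv Ghs Ghp Ghc hl1' hm'
    refine ⟨Polynomial.aeval A ε, Polynomial.aeval A υ, ?_, ?_, ?_, ?_⟩
    · show Polynomial.aeval A ε * Polynomial.aeval A ε = Polynomial.aeval A ε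
      rw [← map_mul, hidem, map_add, map_mul, hq0, mul_zero, add_zero]
    · refine ⟨⟨Polynomial.aeval A υ, Polynomial.aeval A V, ?_, ?_⟩, rfl⟩
      · rw [← map_mul, hunit, map_add, map_mul, hq0, mul_zero, add_zero, map_one]
      · rw [← map_mul, mul_comm V υ, hunit, map_add, map_mul, hq0, mul_zero, add_zero,
          map_one]
    · conv_lhs => rw [show A = Polynomial.aeval (R := R) A Polynomial.X from (Polynomial.aeval_X (R := R) A).symm]
      rw [hsum, map_add]
    · rw [← map_mul, ← map_mul, mul_comm ε υ]
  tfae_have 2 → 3 := by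
    intro h2' x hx
    obtain ⟨i2, hi2⟩ := h2.exists_right_inv
    have h1x : (1:R) - x ∈ Ideal.jacobson (⊥ : Ideal R) := by
      have := (Ideal.jacobson (⊥ : Ideal R)).neg_mem hx
      rwa [show -(x-1) = 1 - x by ring] at this
    have haJ : (1-x)*(i2*i2) ∈ Ideal.jacobson (⊥ : Ideal R) :=
      Ideal.mul_mem_right _ _ h1x
    obtain ⟨r, hrJ, hr⟩ := root_in_J hR haJ (h2' _ haJ)
    refine ⟨1 - 2*r, ?_, ?_⟩
    · rw [show (1:R) - 2*r - 1 = -(2*r) by ring]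
      exact (Ideal.jacobson (⊥ : Ideal R)).neg_mem (Ideal.mul_mem_left _ 2 hrJ)
    · linear_combination 4*hr + (-(1-x)*(2*i2+1))*hi2
  tfae_have 3 → 4 := by
    intro h3' x hx
    exact (h3' x hx).imp fun y hy => hy.2
  tfae_have 4 → 2 := by
    intro h4' a ha
    obtain ⟨i2, hi2⟩ := h2.exists_right_inv
    have hx : (1 - 4*a) - 1 ∈ Ideal.jacobson (⊥ : Ideal R) := by
      rw [show (1 - 4*a) - 1 = -(4*a) by ring]
      exact (Ideal.jacobson (⊥ : Ideal R)).neg_mem (Ideal.mul_mem_left _ 4 ha)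
    obtain ⟨y, hy⟩ := h4' _ hx
    refine ⟨(1-y)*i2, ?_⟩
    linear_combination i2^2*hy + ((1-y)*i2 - a*(2*i2+1))*hi2
  tfae_finish
end

section
/- Let R = ℤ[√−5] with θ = √−5. The monic polynomial t² − 3t + (2 − 8θ) ∈ R[t] has no SR-factorization: there do not exist monic polynomials f₀, f₁ ∈ R[t] with f₀f₁ = t² − 3t + (2 − 8θ) such that f₀(0) and f₁(1) are units of R. -/
/-- An SR-factorization of a monic polynomial `f` is a factorization `f = f₀ * f₁` into monic
polynomials with `f₀(0)` and `f₁(1)` units. -/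
def HasSRFactorization {R : Type*} [CommRing R] (f : Polynomial R) : Prop :=
  ∃ f₀ f₁ : Polynomial R, f₀.Monic ∧ f₁.Monic ∧ f = f₀ * f₁ ∧
    IsUnit (f₀.eval 0) ∧ IsUnit (f₁.eval 1)

open Polynomial

/-!
A factorization of a polynomial of degree at most two into monic factors is either trivial,
giving a unit value at `0` or `1`, or a product of linear factors; then `f₀ = X + a` with `a` a
unit, and `-a` is a unit root. Units of `ℤ[√-5]` are rational integers, and at every rational
integer `n` the value `n² - 3n + 2 - 8√-5` has imaginary part `-8`, so it is neither a unit nor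
zero.
-/

theorem HasSRFactorization.isUnit_eval_or_exists_isRoot {R : Type*} [CommRing R] {f : R[X]}
    (hf : HasSRFactorization f) (hdeg : f.natDegree ≤ 2) :
    IsUnit (f.eval 0) ∨ IsUnit (f.eval 1) ∨ ∃ u, IsUnit u ∧ f.IsRoot u := by
  obtain ⟨f₀, f₁, h₀, h₁, rfl, hu₀, hu₁⟩ := hf
  rw [h₀.natDegree_mul h₁] at hdeg
  obtain hd₀ | hd₀ | hd₀ : f₀.natDegree = 0 ∨ f₀.natDegree = 1 ∨ f₁.natDegree = 0 := by omega
  · rw [h₀.natDegree_eq_zero.mp hd₀, one_mul]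
    exact Or.inr (Or.inl hu₁)
  · have hlin : f₀ = X + C (f₀.eval 0) := by
      rw [← coeff_zero_eq_eval_zero]; exact h₀.eq_X_add_C hd₀
    refine Or.inr (Or.inr ⟨-f₀.eval 0, hu₀.neg, ?_⟩)
    rw [IsRoot, eval_mul, hlin]
    simp
  · rw [h₁.natDegree_eq_zero.mp hd₀, mul_one]
    exact Or.inl hu₀

theorem Zsqrtd.im_eq_zero_of_isUnit {d : ℤ} (hd : d < -1) {u : ℤ√d} (hu : IsUnit u) :
    u.im = 0 := by
  have hnorm := (Zsqrtd.norm_eq_one_iff' (by omega) u).mpr hu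
  rw [Zsqrtd.norm_def] at hnorm
  nlinarith [sq_nonneg u.re, sq_nonneg u.im]

theorem im_eval_eq_neg_eight_of_im_eq_zero {x : ℤ√(-5)} (hx : x.im = 0) :
    ((X ^ 2 - 3 * X + C (2 - 8 * Zsqrtd.sqrtd)).eval x).im = -8 := by
  simp [sq, hx]

/-- The monic polynomial `t² - 3t + (2 - 8√-5)` over `ℤ[√-5]` has no SR-factorization. -/
theorem no_SRFactorization_example :
    ¬ HasSRFactorization
        ((X : Polynomial (Zsqrtd (-5))) ^ 2 - 3 * X + C (2 - 8 * Zsqrtd.sqrtd)) := by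
  intro hSR
  have hd : (-5 : ℤ) < -1 := by norm_num
  have him_ne {x : ℤ√(-5)} (hx : x.im = 0) :
      ((X ^ 2 - 3 * X + C (2 - 8 * Zsqrtd.sqrtd)).eval x).im ≠ 0 := by
    rw [im_eval_eq_neg_eight_of_im_eq_zero hx]; norm_num
  rcases hSR.isUnit_eval_or_exists_isRoot (by compute_degree) with h | h | ⟨u, hu, hroot⟩
  · exact him_ne rfl (Zsqrtd.im_eq_zero_of_isUnit hd h)
  · exact him_ne rfl (Zsqrtd.im_eq_zero_of_isUnit hd h)
  · exact him_ne (Zsqrtd.im_eq_zero_of_isUnit hd hu) (by rw [hroot.eq_zero]; rfl)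
end

section
/- Let ℤ₍₂₎ denote the localization of ℤ at the prime ideal generated by 2, and let R = ℤ₍₂₎ × ℤ₍₂₎. The monic polynomial h = t² + (3,1)t + (2,3) ∈ R[t] has no SR-factorization in R[t], but h has a gSRC-factorization in R[t]. -/
/-- An SRC-factorization is an SR-factorization `f = f₀ * f₁` in which moreover the ideal
`(f₀, f₁)` is all of `R[t]`, i.e. `f₀ * u + f₁ * v = 1` for some `u, v`. -/
def HasSRCFactorization {R : Type*} [CommRing R] (f : Polynomial R) : Prop :=
  ∃ f₀ f₁ : Polynomial R, f₀.Monic ∧ f₁.Monic ∧ f = f₀ * f₁ ∧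
    IsUnit (f₀.eval 0) ∧ IsUnit (f₁.eval 1) ∧ ∃ u v : Polynomial R, f₀ * u + f₁ * v = 1

/-- A complete orthogonal set of idempotents: finitely many idempotents, pairwise orthogonal,
summing to `1`. -/
def IsCompleteOrthogonalIdempotents {R : Type*} [CommRing R] {k : ℕ} (e : Fin k → R) : Prop :=
  (∀ i, IsIdempotentElem (e i)) ∧ (∀ i j, i ≠ j → e i * e j = 0) ∧ ∑ i, e i = 1

/-- A monic `h ∈ R[t]` has a gSRC-factorization if there is a complete orthogonal set of
idempotents `e₁, …, e_k` such that the image of `h` in `(R/(1-eᵢ))[t]` has an SRC-factorization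
for each `i`. -/
def HasGSRCFactorization {R : Type*} [CommRing R] (h : Polynomial R) : Prop :=
  ∃ (k : ℕ) (e : Fin k → R), IsCompleteOrthogonalIdempotents e ∧
    ∀ i, HasSRCFactorization (h.map (Ideal.Quotient.mk (Ideal.span {1 - e i})))

open Polynomial

instance : (Ideal.span {(2 : ℤ)}).IsPrime := by
  rw [Ideal.span_singleton_prime (by norm_num)]
  exact Int.prime_two

/-- `ℤ₍₂₎`, the localization of `ℤ` at the prime ideal `(2)`. -/
abbrev Ztwo : Type := Localization.AtPrime (Ideal.span {(2 : ℤ)})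

section Factorization

variable {R S : Type*} [CommRing R] [CommRing S]

theorem HasSRCFactorization.map {f : R[X]} (φ : R →+* S) (hf : HasSRCFactorization f) :
    HasSRCFactorization (f.map φ) := by
  obtain ⟨f₀, f₁, hf₀, hf₁, rfl, hu₀, hu₁, u, v, huv⟩ := hf
  refine ⟨f₀.map φ, f₁.map φ, hf₀.map φ, hf₁.map φ, Polynomial.map_mul φ, ?_, ?_,
    u.map φ, v.map φ, ?_⟩
  · simpa [eval_map, ← hom_eval₂, ← eval_map] using hu₀.map φ
  · simpa [eval_map, ← hom_eval₂, ← eval_map] using hu₁.map φ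
  · simpa using congrArg (Polynomial.map φ) huv

theorem hasSRCFactorization_map_mk_of_ker_eq {φ : R →+* S} (hφ : Function.Surjective φ)
    {I : Ideal R} (hI : RingHom.ker φ = I) {f : R[X]} (hf : HasSRCFactorization (f.map φ)) :
    HasSRCFactorization (f.map (Ideal.Quotient.mk I)) := by
  subst hI
  have h := hf.map (RingHom.quotientKerEquivOfSurjective hφ).symm.toRingHom
  rwa [Polynomial.map_map, RingHom.quotientKerEquivOfSurjective_symm_comp] at h

theorem hasSRCFactorization_of_isUnit_eval_one {f : R[X]} (hf : f.Monic)
    (h1 : IsUnit (f.eval 1)) : HasSRCFactorization f :=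
  ⟨1, f, monic_one, hf, (one_mul f).symm, by simp, h1, 1, 0, by simp⟩

theorem hasSRCFactorization_X_add_C_mul_X_add_C {a b : R} (ha : IsUnit a)
    (hb : IsUnit (1 + b)) (hab : IsUnit (b - a)) :
    HasSRCFactorization ((X + C a) * (X + C b)) := by
  obtain ⟨w, hw⟩ := hab
  refine ⟨X + C a, X + C b, monic_X_add_C a, monic_X_add_C b, rfl, by simpa using ha,
    by simpa using hb, -C ↑w⁻¹, C ↑w⁻¹, ?_⟩
  calc (X + C a) * -C ↑w⁻¹ + (X + C b) * C ↑w⁻¹ = C ((b - a) * ↑w⁻¹) := by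
        rw [C_mul, C_sub]; ring
    _ = 1 := by rw [← hw, Units.mul_inv, C_1]

theorem HasSRFactorization.isUnit_eval_or_eq_mul {f : R[X]} (hdeg : f.natDegree = 2)
    (hf : HasSRFactorization f) :
    IsUnit (f.eval 0) ∨ IsUnit (f.eval 1) ∨ ∃ a b : R, f = (X + C a) * (X + C b) := by
  obtain ⟨f₀, f₁, hf₀, hf₁, rfl, hu₀, hu₁⟩ := hf
  rw [hf₀.natDegree_mul hf₁] at hdeg
  obtain h₀ | ⟨h₀, h₁⟩ | h₁ :
      f₀.natDegree = 0 ∨ (f₀.natDegree = 1 ∧ f₁.natDegree = 1) ∨ f₁.natDegree = 0 := by omega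
  · rw [hf₀.natDegree_eq_zero.mp h₀, one_mul]
    exact .inr (.inl hu₁)
  · rw [hf₀.eq_X_add_C h₀, hf₁.eq_X_add_C h₁]
    exact .inr (.inr ⟨_, _, rfl⟩)
  · rw [hf₁.natDegree_eq_zero.mp h₁, mul_one]
    exact .inl hu₀

end Factorization

section Prod

variable {A B : Type*} [CommRing A] [CommRing B]

theorem RingHom.ker_fst_eq_span : RingHom.ker (RingHom.fst A B) = Ideal.span {1 - (1, 0)} := by
  ext x
  simp [Ideal.mem_span_singleton', Prod.ext_iff, eq_comm]

theorem RingHom.ker_snd_eq_span : RingHom.ker (RingHom.snd A B) = Ideal.span {1 - (0, 1)} := by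
  ext x
  simp [Ideal.mem_span_singleton', Prod.ext_iff, eq_comm]

theorem isCompleteOrthogonalIdempotents_prod :
    IsCompleteOrthogonalIdempotents ![((1 : A), (0 : B)), (0, 1)] := by
  refine ⟨fun i => ?_, fun i j hij => ?_, by simp [Fin.sum_univ_two]⟩
  · fin_cases i <;> simp [IsIdempotentElem]
  · fin_cases i <;> fin_cases j <;> simp_all

theorem hasGSRCFactorization_of_fst_of_snd {f : (A × B)[X]}
    (h₁ : HasSRCFactorization (f.map (RingHom.fst A B)))
    (h₂ : HasSRCFactorization (f.map (RingHom.snd A B))) : HasGSRCFactorization f := by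
  refine ⟨2, _, isCompleteOrthogonalIdempotents_prod, Fin.forall_fin_two.mpr ⟨?_, ?_⟩⟩
  · exact hasSRCFactorization_map_mk_of_ker_eq Prod.fst_surjective RingHom.ker_fst_eq_span h₁
  · exact hasSRCFactorization_map_mk_of_ker_eq Prod.snd_surjective RingHom.ker_snd_eq_span h₂

end Prod

namespace Ztwo

theorem isUnit_intCast_iff (n : ℤ) : IsUnit (n : Ztwo) ↔ Odd n := by
  rw [← eq_intCast (algebraMap ℤ Ztwo),
    IsLocalization.AtPrime.isUnit_to_map_iff Ztwo (Ideal.span {(2 : ℤ)}), Ideal.mem_primeCompl_iff,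
    Ideal.mem_span_singleton, ← even_iff_two_dvd, Int.not_even_iff_odd]

theorem isUnit_ofNat_iff (n : ℕ) [n.AtLeastTwo] : IsUnit (ofNat(n) : Ztwo) ↔ Odd n := by
  rw [← Nat.cast_ofNat (R := Ztwo), ← Int.cast_natCast, isUnit_intCast_iff, Int.odd_coe_nat]
  rfl

noncomputable def toZModTwo : Ztwo →+* ZMod 2 :=
  IsLocalization.lift (M := (Ideal.span {(2 : ℤ)}).primeCompl) (g := Int.castRingHom (ZMod 2))
    fun ⟨n, hn⟩ => by
      rw [Ideal.mem_primeCompl_iff, Ideal.mem_span_singleton] at hn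
      rwa [eq_intCast, isUnit_iff_ne_zero, Ne, ZMod.intCast_zmod_eq_zero_iff_dvd]

theorem sq_add_self_add_three_ne_zero (r : Ztwo) : r ^ 2 + r + 3 ≠ 0 := fun hr => by
  have h := congrArg toZModTwo hr
  rw [map_add, map_add, map_pow, map_ofNat, map_zero] at h
  revert h
  generalize toZModTwo r = x
  decide +revert

end Ztwo

/-- Over `R = ℤ₍₂₎ × ℤ₍₂₎`, the polynomial `t² + (3,1)t + (2,3)` has no SR-factorization,
but has a gSRC-factorization. -/
theorem example_no_SR_but_gSRC :
    ¬ HasSRFactorization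
        ((X : Polynomial (Ztwo × Ztwo)) ^ 2 + C ((3 : Ztwo), (1 : Ztwo)) * X +
          C ((2 : Ztwo), (3 : Ztwo))) ∧
      HasGSRCFactorization
        ((X : Polynomial (Ztwo × Ztwo)) ^ 2 + C ((3 : Ztwo), (1 : Ztwo)) * X +
          C ((2 : Ztwo), (3 : Ztwo))) := by
  have hmonic : (X ^ 2 + C ((3 : Ztwo), (1 : Ztwo)) * X + C (2, 3)).Monic := by monicity!
  refine ⟨fun hSR => ?_, hasGSRCFactorization_of_fst_of_snd ?_ ?_⟩
  · obtain h0 | h1 | ⟨a, b, hab⟩ := hSR.isUnit_eval_or_eq_mul (by compute_degree!)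
    · norm_num [Prod.isUnit_iff, Ztwo.isUnit_ofNat_iff] at h0
    · norm_num [Prod.isUnit_iff, Ztwo.isUnit_ofNat_iff] at h1
    · have hroot : (-a.2) ^ 2 + -a.2 + 3 = 0 := by
        simpa using congrArg (fun p => (p.eval (-a)).2) hab
      exact Ztwo.sq_add_self_add_three_ne_zero _ hroot
  · have h : (X ^ 2 + C 3 * X + C 2 : Ztwo[X]) = (X + C 1) * (X + C 2) := by
      simp only [map_one, map_ofNat]; ring
    simp only [Polynomial.map_add, Polynomial.map_mul, Polynomial.map_pow, map_X, map_C,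
      RingHom.coe_fst, h]
    exact hasSRCFactorization_X_add_C_mul_X_add_C isUnit_one
      (by norm_num [Ztwo.isUnit_ofNat_iff]) (by norm_num)
  · refine hasSRCFactorization_of_isUnit_eval_one (hmonic.map _) ?_
    norm_num [Ztwo.isUnit_ofNat_iff]
end

section
/- A commutative ring R is clean if and only if every Pierce stalk of R is a local ring, i.e., for every prime ideal 𝔭 of R the quotient ring R/I(𝔭) is local, where I(𝔭) is the ideal of R generated by the idempotents of R lying in 𝔭. -/
/-- A ring is *clean* if every element is the sum of an idempotent and a unit. -/
def IsCleanRing (R : Type*) [Ring R] : Prop :=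
  ∀ a : R, ∃ e u : R, IsIdempotentElem e ∧ IsUnit u ∧ a = e + u

/-- The ideal of `R` generated by the idempotents of `R` lying in `p`; the Pierce stalk of `R`
at the prime `p` is `R ⧸ pierceIdeal p`. -/
def pierceIdeal {R : Type*} [CommRing R] (p : Ideal R) : Ideal R :=
  Ideal.span {e : R | IsIdempotentElem e ∧ e ∈ p}

/-!
If `a = e + u` is a clean decomposition, then `e (1 - e) = 0` puts `e` or `1 - e` into the prime `𝔭`,
so in the Pierce stalk at `𝔭` the image of `a` is a unit or one minus a unit: the stalk is local.

Conversely, fix `a` and call an idempotent `f` good if `a` is clean in the corner `f R`. Good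
idempotents are closed under `f ⊔ g = f + g (1 - f)`, by gluing the decompositions on the orthogonal
pieces `f` and `g (1 - f)`. An element of an ideal spanned by a `⊔`-closed set of idempotents is fixed
by one of them. Applied to the Pierce ideal of a maximal ideal `𝔪`, locality of the stalk at `𝔪`
yields an idempotent `f ∈ 𝔪` with `1 - f` good, so the good idempotents lie in no maximal ideal.
Hence they span `R`, so `1` is good, which says that `a` is clean.
-/

section

variable {R : Type*} [CommRing R]

theorem exists_mul_eq_self_of_mem_span_idempotents {S : Set R}
    (hS : ∀ e ∈ S, IsIdempotentElem e) (hS0 : (0 : R) ∈ S)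
    (hSsup : ∀ f ∈ S, ∀ g ∈ S, f + g - f * g ∈ S) {x : R} (hx : x ∈ Ideal.span S) :
    ∃ f ∈ S, x * f = x := by
  induction hx using Submodule.span_induction with
  | mem e he => exact ⟨e, he, (hS e he).eq⟩
  | zero => exact ⟨0, hS0, zero_mul 0⟩
  | add x y _ _ hx hy =>
    obtain ⟨f, hf, hxf⟩ := hx
    obtain ⟨g, hg, hyg⟩ := hy
    exact ⟨f + g - f * g, hSsup f hf g hg, by linear_combination (1 - g) * hxf + (1 - f) * hyg⟩
  | smul r x _ hx =>
    obtain ⟨f, hf, hxf⟩ := hx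
    exact ⟨f, hf, by rw [smul_eq_mul, mul_assoc, hxf]⟩

theorem one_mem_of_span_idempotents_eq_top {S : Set R}
    (hS : ∀ e ∈ S, IsIdempotentElem e) (hS0 : (0 : R) ∈ S)
    (hSsup : ∀ f ∈ S, ∀ g ∈ S, f + g - f * g ∈ S) (hspan : Ideal.span S = ⊤) : (1 : R) ∈ S := by
  obtain ⟨f, hf, h1f⟩ :=
    exists_mul_eq_self_of_mem_span_idempotents hS hS0 hSsup (hspan ▸ Submodule.mem_top (x := 1))
  rw [one_mul] at h1f
  rwa [h1f] at hf

theorem pierceIdeal_le (p : Ideal R) : pierceIdeal p ≤ p :=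
  Ideal.span_le.2 fun _ he => he.2

theorem exists_idempotent_mem_mul_eq_self_of_mem_pierceIdeal {p : Ideal R} {x : R}
    (hx : x ∈ pierceIdeal p) : ∃ f, IsIdempotentElem f ∧ f ∈ p ∧ x * f = x := by
  obtain ⟨f, ⟨hf, hfp⟩, hxf⟩ := exists_mul_eq_self_of_mem_span_idempotents
    (S := {e | IsIdempotentElem e ∧ e ∈ p}) (fun _ he => he.1) ⟨.zero, p.zero_mem⟩
    (fun f hf g hg => ⟨hf.1.add_sub_mul hg.1,
      p.sub_mem (p.add_mem hf.2 hg.2) (p.mul_mem_right g hf.2)⟩) hx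
  exact ⟨f, hf, hfp, hxf⟩

theorem mk_pierceIdeal_eq_zero_or_eq_one {p : Ideal R} [hp : p.IsPrime] {e : R}
    (he : IsIdempotentElem e) :
    Ideal.Quotient.mk (pierceIdeal p) e = 0 ∨ Ideal.Quotient.mk (pierceIdeal p) e = 1 := by
  have : e * (1 - e) ∈ p := by
    rw [show e * (1 - e) = 0 by linear_combination -he.eq]
    exact p.zero_mem
  rcases hp.mem_or_mem this with hep | hep
  · exact .inl (Ideal.Quotient.eq_zero_iff_mem.2 (Ideal.subset_span ⟨he, hep⟩))
  · right
    rw [← map_one (Ideal.Quotient.mk (pierceIdeal p)), eq_comm, Ideal.Quotient.eq]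
    exact Ideal.subset_span ⟨he.one_sub, hep⟩

theorem IsCleanRing.isLocalRing_pierceStalk (h : IsCleanRing R) (p : Ideal R) [hp : p.IsPrime] :
    IsLocalRing (R ⧸ pierceIdeal p) := by
  have : Nontrivial (R ⧸ pierceIdeal p) :=
    Ideal.Quotient.nontrivial_iff.2 (ne_top_of_le_ne_top hp.ne_top (pierceIdeal_le p))
  refine .of_isUnit_or_isUnit_one_sub_self fun x => ?_
  obtain ⟨a, rfl⟩ := Ideal.Quotient.mk_surjective x
  obtain ⟨e, u, he, hu, rfl⟩ := h a
  rcases mk_pierceIdeal_eq_zero_or_eq_one (p := p) he with he0 | he1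
  · left
    simpa [he0] using hu.map (Ideal.Quotient.mk (pierceIdeal p))
  · right
    simpa [he1] using (hu.map (Ideal.Quotient.mk (pierceIdeal p))).neg

/-- `a` is clean in the corner ring `f R`. -/
def IsCleanOn (f a : R) : Prop :=
  ∃ e b : R, IsIdempotentElem e ∧ (a - e) * b * f = f

theorem IsCleanOn.mul_right {f a : R} (h : IsCleanOn f a) (c : R) : IsCleanOn (f * c) a := by
  obtain ⟨e, b, he, heb⟩ := h
  exact ⟨e, b, he, by rw [← mul_assoc, heb]⟩

theorem IsCleanOn.add_of_mul_eq_zero {f g a : R} (hf : IsIdempotentElem f)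
    (hg : IsIdempotentElem g) (hfg : f * g = 0) (h₁ : IsCleanOn f a) (h₂ : IsCleanOn g a) :
    IsCleanOn (f + g) a := by
  obtain ⟨e₁, b₁, he₁, h₁⟩ := h₁
  obtain ⟨e₂, b₂, he₂, h₂⟩ := h₂
  refine ⟨e₁ * f + e₂ * g, b₁ * f + b₂ * g,
    (he₁.mul hf).add (he₂.mul hg) (by linear_combination (2 * e₁ * e₂) * hfg), ?_⟩
  have hb : (b₁ * f + b₂ * g) * (f + g) = b₁ * f + b₂ * g := by
    linear_combination b₁ * hf.eq + (b₁ + b₂) * hfg + b₂ * hg.eq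
  rw [mul_assoc, hb]
  linear_combination h₁ + h₂ - e₁ * b₁ * hf.eq - e₂ * b₂ * hg.eq - (e₂ * b₁ + e₁ * b₂) * hfg

theorem IsCleanOn.sup {f g a : R} (hf : IsIdempotentElem f) (hg : IsIdempotentElem g)
    (h₁ : IsCleanOn f a) (h₂ : IsCleanOn g a) : IsCleanOn (f + g - f * g) a := by
  have h := h₁.add_of_mul_eq_zero hf (hg.mul hf.one_sub)
    (by linear_combination (-g) * hf.eq) (h₂.mul_right (1 - f))
  rwa [show f + g * (1 - f) = f + g - f * g by ring] at h

theorem exists_isCleanOn_one_sub_of_isLocalRing {p : Ideal R}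
    [IsLocalRing (R ⧸ pierceIdeal p)] (a : R) :
    ∃ f, IsIdempotentElem f ∧ f ∈ p ∧ IsCleanOn (1 - f) a := by
  obtain ⟨e, b, he, hmem⟩ : ∃ e b : R, IsIdempotentElem e ∧ (a - e) * b - 1 ∈ pierceIdeal p := by
    rcases IsLocalRing.isUnit_or_isUnit_one_sub_self (Ideal.Quotient.mk (pierceIdeal p) a)
      with hu | hu
    · obtain ⟨c, hc⟩ := hu.exists_right_inv
      obtain ⟨b, rfl⟩ := Ideal.Quotient.mk_surjective c
      exact ⟨0, b, .zero, Ideal.Quotient.eq_zero_iff_mem.1 (by simp [hc])⟩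
    · obtain ⟨c, hc⟩ := hu.exists_right_inv
      obtain ⟨b, rfl⟩ := Ideal.Quotient.mk_surjective c
      refine ⟨1, -b, .one, Ideal.Quotient.eq_zero_iff_mem.1 ?_⟩
      rw [show (a - 1) * -b - 1 = (1 - a) * b - 1 by ring]
      simp [hc]
  obtain ⟨f, hf, hfp, hxf⟩ := exists_idempotent_mem_mul_eq_self_of_mem_pierceIdeal hmem
  exact ⟨f, hf, hfp, e, b, he, by linear_combination -hxf⟩

theorem isCleanRing_of_isLocalRing_pierceStalk
    (h : ∀ p : Ideal R, p.IsPrime → IsLocalRing (R ⧸ pierceIdeal p)) : IsCleanRing R := by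
  intro a
  set S := {f : R | IsIdempotentElem f ∧ IsCleanOn f a}
  have hS0 : (0 : R) ∈ S := ⟨.zero, 0, 0, .zero, by ring⟩
  have hSsup : ∀ f ∈ S, ∀ g ∈ S, f + g - f * g ∈ S := fun f hf g hg =>
    ⟨hf.1.add_sub_mul hg.1, hf.2.sup hf.1 hg.1 hg.2⟩
  have hspan : Ideal.span S = ⊤ := by
    by_contra hne
    obtain ⟨m, hm, hSm⟩ := Ideal.exists_le_maximal _ hne
    have := h m hm.isPrime
    obtain ⟨f, hf, hfm, hclean⟩ := exists_isCleanOn_one_sub_of_isLocalRing (p := m) a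
    have h1f : 1 - f ∈ m := hSm (Ideal.subset_span ⟨hf.one_sub, hclean⟩)
    exact hm.ne_top ((Ideal.eq_top_iff_one m).2 (by simpa using m.add_mem hfm h1f))
  obtain ⟨e, b, he, heb⟩ := (one_mem_of_span_idempotents_eq_top (fun _ hf => hf.1) hS0 hSsup hspan).2
  exact ⟨e, a - e, he, IsUnit.of_mul_eq_one b (by simpa using heb), by ring⟩

end

/-- A commutative ring is clean iff all of its Pierce stalks are local rings. -/
theorem cleanRing_iff_pierceStalks_local {R : Type*} [CommRing R] :
    IsCleanRing R ↔ ∀ p : Ideal R, p.IsPrime → IsLocalRing (R ⧸ pierceIdeal p) :=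
  ⟨fun h _ _ => h.isLocalRing_pierceStalk _, isCleanRing_of_isLocalRing_pierceStalk⟩
end

section
/- Let R be a commutative ring, 𝔭 a prime ideal of R, and r, s ∈ R such that r − s lies in the ideal of R generated by the idempotents of R lying in 𝔭. Then there exists an idempotent e ∈ R with e ∉ 𝔭 and re = se. -/
theorem exists_idem_annihilator {R : Type*} [CommRing R]
    (p : Ideal R) (hp : p.IsPrime) (x : R) (h : x ∈ pierceIdeal p) :
    ∃ e : R, IsIdempotentElem e ∧ e ∉ p ∧ x * e = 0 := by
  induction h using Submodule.span_induction with
  | mem y hy =>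
    obtain ⟨hy, hyp⟩ := hy
    refine ⟨1 - y, ?_, ?_, ?_⟩
    · unfold IsIdempotentElem at hy ⊢; linear_combination hy
    · intro hm
      exact hp.ne_top (Ideal.eq_top_iff_one p |>.mpr (by simpa using Ideal.add_mem p hm hyp))
    · unfold IsIdempotentElem at hy; linear_combination -hy
  | zero => exact ⟨1, by simp [IsIdempotentElem], hp.ne_top ∘ (Ideal.eq_top_iff_one p).mpr, by simp⟩
  | add x y _ _ ihx ihy =>
    obtain ⟨e₁, he₁, hp₁, hx⟩ := ihx
    obtain ⟨e₂, he₂, hp₂, hy⟩ := ihy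
    refine ⟨e₁ * e₂, ?_, ?_, ?_⟩
    · unfold IsIdempotentElem at *; linear_combination e₂ * e₂ * he₁ + e₁ * he₂
    · intro hm; rcases hp.mem_or_mem hm with h | h <;> [exact hp₁ h; exact hp₂ h]
    · linear_combination e₂ * hx + e₁ * hy
  | smul a x _ ihx =>
    obtain ⟨e, he, hpe, hx⟩ := ihx
    exact ⟨e, he, hpe, by rw [smul_eq_mul, mul_assoc, hx, mul_zero]⟩

/-- If `r` and `s` have the same image in the Pierce stalk at the prime `p`, then there is an
idempotent `e ∉ p` with `r e = s e`. -/
theorem exists_idempotent_eq_of_sub_mem_pierceIdeal {R : Type*} [CommRing R]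
    (p : Ideal R) (hp : p.IsPrime) (r s : R) (h : r - s ∈ pierceIdeal p) :
    ∃ e : R, IsIdempotentElem e ∧ e ∉ p ∧ r * e = s * e := by
  obtain ⟨e, he, hpe, hx⟩ := exists_idem_annihilator p hp _ h
  exact ⟨e, he, hpe, by linear_combination hx⟩
end
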